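/- arXiv:1906.12224 — 2 statements merged into one kernel-verified Lean document; each statement's English description precedes it below -/
import Mathlib

section
/- For a tetrahedron, the same pseudoface squared-area identity holds with the complementary pair of faces: 4L² = Δ₂² + Δ₃² − 2Δ₂Δ₃ cos A, where A is the dihedral angle along edge OA between faces OCA and OAB, and L is the medial parallelogram area for the edge pair (OA, BC). In particular Δ₀² + Δ₁² − 2Δ₀Δ₁ cos X = Δ₂² + Δ₃² − 2Δ₂Δ₃ cos A. -/
/-!
Both sides equal `‖n₂ + n₃‖² / 4`, where `n₂, n₃` are the area vectors of faces `OCA, OAB`: by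
bilinearity `(A - O) × (C - B) = -(n₂ + n₃)`, and since the oriented face areas of a tetrahedron
sum to zero, the area vectors of faces `ABC, OBC` have the same sum. The law of cosines for the
sum of two vectors then gives both identities.
-/

open RealInnerProductSpace InnerProductGeometry

noncomputable def cross3 (u v : EuclideanSpace ℝ (Fin 3)) : EuclideanSpace ℝ (Fin 3) :=
  (WithLp.equiv 2 (Fin 3 → ℝ)).symm
    ![u 1 * v 2 - u 2 * v 1, u 2 * v 0 - u 0 * v 2, u 0 * v 1 - u 1 * v 0]

/-- `-⟪u, v⟫ / (‖u‖ * ‖v‖)` is the cosine of the angle between `u` and `-v` (also when one of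
them is zero), so this is the law of cosines for `u - (-v)`. -/
theorem norm_add_sq_of_eq_neg_inner_div {V : Type*} [NormedAddCommGroup V]
    [InnerProductSpace ℝ V] {u v : V} {c : ℝ} (hc : c = -(⟪u, v⟫ / (‖u‖ * ‖v‖))) :
    ‖u + v‖ ^ 2 = ‖u‖ ^ 2 + ‖v‖ ^ 2 - 2 * ‖u‖ * ‖v‖ * c := by
  have hc' : Real.cos (angle u (-v)) = c := by
    rw [cos_angle, norm_neg, inner_neg_right, neg_div, hc]
  have h := norm_sub_sq_eq_norm_sq_add_norm_sq_sub_two_mul_norm_mul_norm_mul_cos_angle u (-v)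
  rw [sub_neg_eq_add, norm_neg, hc'] at h
  linear_combination h

theorem cross3_swap (u v : EuclideanSpace ℝ (Fin 3)) : cross3 v u = -cross3 u v := by
  ext i
  fin_cases i <;> simp [cross3] <;> ring

theorem cross3_sub_sub (O A B C : EuclideanSpace ℝ (Fin 3)) :
    cross3 (A - O) (C - B) = -(cross3 (C - O) (A - O) + cross3 (A - O) (B - O)) := by
  ext i
  fin_cases i <;> simp [cross3] <;> ring

/-- The oriented face areas of a tetrahedron sum to zero. -/
theorem cross3_add_cross3_eq_of_tetrahedron (O A B C : EuclideanSpace ℝ (Fin 3)) :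
    cross3 (B - A) (C - A) + cross3 (C - O) (B - O) =
      cross3 (C - O) (A - O) + cross3 (A - O) (B - O) := by
  ext i
  fin_cases i <;> simp [cross3] <;> ring

theorem pseudoface_law_of_cosines_complementary_general (O A B C : EuclideanSpace ℝ (Fin 3))
    (Δ₀ Δ₁ Δ₂ Δ₃ L X dihA : ℝ)
    (hΔ₀ : Δ₀ = ‖cross3 (B - A) (C - A)‖ / 2)
    (hΔ₁ : Δ₁ = ‖cross3 (B - O) (C - O)‖ / 2)
    (hΔ₂ : Δ₂ = ‖cross3 (C - O) (A - O)‖ / 2)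
    (hΔ₃ : Δ₃ = ‖cross3 (A - O) (B - O)‖ / 2)
    (hL : L = ‖cross3 (A - O) (C - B)‖ / 4)
    (hX : Real.cos X =
      -(⟪cross3 (B - A) (C - A), cross3 (C - O) (B - O)⟫ /
        (‖cross3 (B - A) (C - A)‖ * ‖cross3 (C - O) (B - O)‖)))
    (hA : Real.cos dihA =
      -(⟪cross3 (C - O) (A - O), cross3 (A - O) (B - O)⟫ /
        (‖cross3 (C - O) (A - O)‖ * ‖cross3 (A - O) (B - O)‖))) :
    4 * L^2 = Δ₂^2 + Δ₃^2 - 2 * Δ₂ * Δ₃ * Real.cos dihA ∧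
      Δ₀^2 + Δ₁^2 - 2 * Δ₀ * Δ₁ * Real.cos X =
        Δ₂^2 + Δ₃^2 - 2 * Δ₂ * Δ₃ * Real.cos dihA := by
  have lawA := norm_add_sq_of_eq_neg_inner_div hA
  have lawX := norm_add_sq_of_eq_neg_inner_div hX
  rw [cross3_add_cross3_eq_of_tetrahedron] at lawX
  rw [cross3_sub_sub, norm_neg] at hL
  rw [cross3_swap, norm_neg] at hΔ₁
  subst hΔ₀ hΔ₁ hΔ₂ hΔ₃ hL
  constructor
  · linear_combination lawA / 4
  · linear_combination (lawA - lawX) / 4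

theorem pseudoface_law_of_cosines_complementary (O A B C : EuclideanSpace ℝ (Fin 3))
    (h : AffineIndependent ℝ ![O, A, B, C]) (Δ₀ Δ₁ Δ₂ Δ₃ L X dihA : ℝ)
    (hΔ₀ : Δ₀ = ‖cross3 (B - A) (C - A)‖ / 2)
    (hΔ₁ : Δ₁ = ‖cross3 (B - O) (C - O)‖ / 2)
    (hΔ₂ : Δ₂ = ‖cross3 (C - O) (A - O)‖ / 2)
    (hΔ₃ : Δ₃ = ‖cross3 (A - O) (B - O)‖ / 2)
    (hL : L = ‖cross3 (A - O) (C - B)‖ / 4)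
    (hX : Real.cos X =
      -(⟪cross3 (B - A) (C - A), cross3 (C - O) (B - O)⟫ /
        (‖cross3 (B - A) (C - A)‖ * ‖cross3 (C - O) (B - O)‖)))
    (hA : Real.cos dihA =
      -(⟪cross3 (C - O) (A - O), cross3 (A - O) (B - O)⟫ /
        (‖cross3 (C - O) (A - O)‖ * ‖cross3 (A - O) (B - O)‖))) :
    4 * L^2 = Δ₂^2 + Δ₃^2 - 2 * Δ₂ * Δ₃ * Real.cos dihA ∧
      Δ₀^2 + Δ₁^2 - 2 * Δ₀ * Δ₁ * Real.cos X =
        Δ₂^2 + Δ₃^2 - 2 * Δ₂ * Δ₃ * Real.cos dihA :=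
  pseudoface_law_of_cosines_complementary_general O A B C Δ₀ Δ₁ Δ₂ Δ₃ L X dihA hΔ₀ hΔ₁ hΔ₂ hΔ₃ hL hX
    hA
end

section
/- For a tetrahedron with all face areas and all medial parallelogram areas given, the cosine of the dihedral angle X along edge BC is cos X = (Δ₀² + Δ₁² − 4L²)/(2Δ₀Δ₁). -/
/-!
With `a = A - O`, `b = B - O`, `c = C - O`, bilinearity and antisymmetry of the cross product give
`(b - a) × (c - a) + c × b = (c - b) × a`: the normals of the two faces meeting along `BC` add up
to the cross product of the opposite edges, of norm `4L`. The law of cosines for this sum of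
vectors is the claimed formula.
-/

open RealInnerProductSpace

/-- If `u = 0` or `v = 0`, both sides are `0` by the convention `x / 0 = 0`. -/
theorem neg_inner_div_norm_mul_norm {E : Type*} [NormedAddCommGroup E] [InnerProductSpace ℝ E]
    (u v : E) :
    -(⟪u, v⟫ / (‖u‖ * ‖v‖)) = (‖u‖ ^ 2 + ‖v‖ ^ 2 - ‖u + v‖ ^ 2) / (2 * ‖u‖ * ‖v‖) := by
  rw [norm_add_sq_real]
  ring

theorem cross3_anticomm (u v : EuclideanSpace ℝ (Fin 3)) : -cross3 v u = cross3 u v := by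
  ext i
  fin_cases i <;>
    simp only [cross3, Fin.isValue, WithLp.equiv_symm_apply, Fin.zero_eta, Fin.mk_one,
      Fin.reduceFinMk, PiLp.neg_apply, Matrix.cons_val_zero, Matrix.cons_val_one,
      Matrix.cons_val] <;>
    ring

theorem norm_cross3_comm (u v : EuclideanSpace ℝ (Fin 3)) : ‖cross3 u v‖ = ‖cross3 v u‖ := by
  rw [← cross3_anticomm, norm_neg]

theorem cross3_faces_add_eq_cross3_opposite_edges (O A B C : EuclideanSpace ℝ (Fin 3)) :
    cross3 (B - A) (C - A) + cross3 (C - O) (B - O) = cross3 (C - B) (A - O) := by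
  ext i
  fin_cases i <;>
    simp only [cross3, Fin.isValue, WithLp.equiv_symm_apply, Fin.zero_eta, Fin.mk_one,
      Fin.reduceFinMk, PiLp.sub_apply, PiLp.add_apply, Matrix.cons_val_zero, Matrix.cons_val_one,
      Matrix.cons_val] <;>
    ring

theorem cos_dihedral_X_from_areas_general (O A B C : EuclideanSpace ℝ (Fin 3))
    (Δ₀ Δ₁ L X : ℝ)
    (hΔ₀ : Δ₀ = ‖cross3 (B - A) (C - A)‖ / 2)
    (hΔ₁ : Δ₁ = ‖cross3 (B - O) (C - O)‖ / 2)
    (hL : L = ‖cross3 (A - O) (C - B)‖ / 4)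
    (hX : Real.cos X =
      -(⟪cross3 (B - A) (C - A), cross3 (C - O) (B - O)⟫ /
        (‖cross3 (B - A) (C - A)‖ * ‖cross3 (C - O) (B - O)‖))) :
    Real.cos X = (Δ₀^2 + Δ₁^2 - 4 * L^2) / (2 * Δ₀ * Δ₁) := by
  rw [hX, neg_inner_div_norm_mul_norm, cross3_faces_add_eq_cross3_opposite_edges,
    hΔ₀, hΔ₁, hL, norm_cross3_comm (B - O), norm_cross3_comm (A - O)]
  ring

theorem cos_dihedral_X_from_areas (O A B C : EuclideanSpace ℝ (Fin 3))
    (h : AffineIndependent ℝ ![O, A, B, C]) (Δ₀ Δ₁ L X : ℝ)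
    (hΔ₀ : Δ₀ = ‖cross3 (B - A) (C - A)‖ / 2)
    (hΔ₁ : Δ₁ = ‖cross3 (B - O) (C - O)‖ / 2)
    (hL : L = ‖cross3 (A - O) (C - B)‖ / 4)
    (hX : Real.cos X =
      -(⟪cross3 (B - A) (C - A), cross3 (C - O) (B - O)⟫ /
        (‖cross3 (B - A) (C - A)‖ * ‖cross3 (C - O) (B - O)‖))) :
    Real.cos X = (Δ₀^2 + Δ₁^2 - 4 * L^2) / (2 * Δ₀ * Δ₁) :=
  cos_dihedral_X_from_areas_general O A B C Δ₀ Δ₁ L X hΔ₀ hΔ₁ hL hX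
end
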